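/- arXiv:1809.04387 — 7 statements merged into one kernel-verified Lean document; each statement's English description precedes it below -/
import Mathlib

section
/- Let S be a set of n×n complex matrices, P a p×n matrix, and Q an n×q matrix. Let k be the smallest positive integer such that P·A₁⋯A_k·Q ≠ 0 for some A₁,…,A_k ∈ S. Then for any A₁,…,A_k ∈ S, the rank of P·A₁⋯A_k·Q is at most n/k. -/
/-!
Put `Yᵢ = P A₁⋯Aᵢ` and `Xⱼ = Aⱼ₊₁⋯A_k Q`. Minimality of `k` gives `Yᵢ Xⱼ = 0` for `i < j`, while
every `Yᵢ Xᵢ` is the product `M = P A₁⋯A_k Q`. Hence the subspaces `Kₘ = ⋂_{i<m} ker Yᵢ` of `ℂⁿ`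
contain the range of `Xₘ`, so `Yₘ` maps `Kₘ` onto a space of dimension at least `rank M`, and
`dim Kₘ₊₁ ≤ dim Kₘ - rank M`. After `k` steps, `k · rank M ≤ n`.
-/

open Module Submodule LinearMap

section

variable {K V W U : Type*} [DivisionRing K] [AddCommGroup V] [Module K V] [FiniteDimensional K V]
  [AddCommGroup W] [Module K W] [AddCommGroup U] [Module K U]

theorem Submodule.finrank_map_add_finrank_inf_ker (N : Submodule K V) (f : V →ₗ[K] W) :
    finrank K (N.map f) + finrank K ↥(N ⊓ ker f) = finrank K N := by
  rw [← range_domRestrict, ← map_comap_subtype, finrank_map_subtype_eq, ← ker_domRestrict]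
  exact finrank_range_add_finrank_ker _

theorem finrank_range_comp_add_finrank_inf_ker_le {N : Submodule K V} (f : V →ₗ[K] W)
    (g : U →ₗ[K] V) (hg : range g ≤ N) :
    finrank K (range (f ∘ₗ g)) + finrank K ↥(N ⊓ ker f) ≤ finrank K N := by
  rw [← N.finrank_map_add_finrank_inf_ker f, range_comp]
  gcongr
  exact finrank_mono (map_mono hg)

theorem sum_finrank_range_comp_add_finrank_iInf_ker_le (f : ℕ → V →ₗ[K] W) (g : ℕ → U →ₗ[K] V)
    (m : ℕ) (h : ∀ i j, i < j → j < m → f i ∘ₗ g j = 0) :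
    ∑ i ∈ Finset.range m, finrank K (range (f i ∘ₗ g i)) +
      finrank K ↥(⨅ i ∈ Finset.range m, ker (f i)) ≤ finrank K V := by
  induction m with
  | zero => simpa only [Finset.sum_range_zero, zero_add] using finrank_le _
  | succ m ih =>
    have hg : range (g m) ≤ ⨅ i ∈ Finset.range m, ker (f i) := by
      simp only [le_iInf_iff, Finset.mem_range]
      exact fun i hi => range_le_ker_iff.mpr (h i m hi (lt_add_one m))
    have hstep := finrank_range_comp_add_finrank_inf_ker_le (f m) (g m) hg
    have hprev := ih fun i j hij hj => h i j hij (by omega)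
    rw [Finset.sum_range_succ, Finset.range_add_one, Finset.iInf_insert, inf_comm]
    omega

theorem sum_finrank_range_comp_le (f : ℕ → V →ₗ[K] W) (g : ℕ → U →ₗ[K] V) (m : ℕ)
    (h : ∀ i j, i < j → j < m → f i ∘ₗ g j = 0) :
    ∑ i ∈ Finset.range m, finrank K (range (f i ∘ₗ g i)) ≤ finrank K V :=
  (Nat.le_add_right _ _).trans (sum_finrank_range_comp_add_finrank_iInf_ker_le f g m h)

end

theorem Matrix.sum_rank_mul_le {K ι κ μ : Type*} [Field K] [Fintype ι] [Fintype μ]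
    (Y : ℕ → Matrix κ ι K) (X : ℕ → Matrix ι μ K) (m : ℕ)
    (h : ∀ i j, i < j → j < m → Y i * X j = 0) :
    ∑ i ∈ Finset.range m, (Y i * X i).rank ≤ Fintype.card ι := by
  have hlin := sum_finrank_range_comp_le (fun i => (Y i).mulVecLin) (fun i => (X i).mulVecLin) m
    fun i j hij hj => by rw [← Matrix.mulVecLin_mul, h i j hij hj, Matrix.mulVecLin_zero]
  rw [finrank_fintype_fun_eq_card] at hlin
  refine le_of_eq_of_le (Finset.sum_congr rfl fun i _ => ?_) hlin
  rw [Matrix.rank, Matrix.mulVecLin_mul]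

theorem stmt0_general (n p q : ℕ) (S : Set (Matrix (Fin n) (Fin n) ℂ))
    (P : Matrix (Fin p) (Fin n) ℂ) (Q : Matrix (Fin n) (Fin q) ℂ)
    (k : ℕ) (hk : 0 < k)
    (hmin : ∀ l : List (Matrix (Fin n) (Fin n) ℂ),
      (∀ A ∈ l, A ∈ S) → 0 < l.length → l.length < k → P * l.prod * Q = 0) :
    ∀ l : List (Matrix (Fin n) (Fin n) ℂ), (∀ A ∈ l, A ∈ S) → l.length = k →
      ((P * l.prod * Q).rank : ℝ) ≤ (n : ℝ) / (k : ℝ) := by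
  intro l hlS hlen
  set Y : ℕ → Matrix (Fin p) (Fin n) ℂ := fun i => P * (l.take (i + 1)).prod
  set X : ℕ → Matrix (Fin n) (Fin q) ℂ := fun j => (l.drop (j + 1)).prod * Q
  have hdiag : ∀ i, Y i * X i = P * l.prod * Q := fun i => by
    simp only [Y, X, Matrix.mul_assoc, ← l.prod_take_mul_prod_drop (i + 1)]
  have hoff : ∀ i j, i < j → j < k → Y i * X j = 0 := by
    intro i j hij hjk
    have hS : ∀ A ∈ l.take (i + 1) ++ l.drop (j + 1), A ∈ S := fun A hA =>
      (List.mem_append.mp hA).elim (fun h => hlS A (List.mem_of_mem_take h))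
        (fun h => hlS A (List.mem_of_mem_drop h))
    have hlen' : (l.take (i + 1) ++ l.drop (j + 1)).length = k - (j - i) := by
      simp only [List.length_append, List.length_take, List.length_drop]
      omega
    have hzero := hmin _ hS (by omega) (by omega)
    simpa [Y, X, List.prod_append, Matrix.mul_assoc] using hzero
  have hsum := Matrix.sum_rank_mul_le Y X k hoff
  simp only [hdiag, Finset.sum_const, Finset.card_range, smul_eq_mul, Fintype.card_fin] at hsum
  rw [le_div_iff₀ (by exact_mod_cast hk), mul_comm]
  exact_mod_cast hsum

theorem stmt0 (n p q : ℕ) (S : Set (Matrix (Fin n) (Fin n) ℂ))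
    (P : Matrix (Fin p) (Fin n) ℂ) (Q : Matrix (Fin n) (Fin q) ℂ)
    (k : ℕ) (hk : 0 < k)
    (hex : ∃ l : List (Matrix (Fin n) (Fin n) ℂ),
      (∀ A ∈ l, A ∈ S) ∧ l.length = k ∧ P * l.prod * Q ≠ 0)
    (hmin : ∀ l : List (Matrix (Fin n) (Fin n) ℂ),
      (∀ A ∈ l, A ∈ S) → 0 < l.length → l.length < k → P * l.prod * Q = 0) :
    ∀ l : List (Matrix (Fin n) (Fin n) ℂ), (∀ A ∈ l, A ∈ S) → l.length = k →
      ((P * l.prod * Q).rank : ℝ) ≤ (n : ℝ) / (k : ℝ) :=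
  stmt0_general n p q S P Q k hk hmin
end

section
/- Let L be a linear subspace of D×D complex matrices such that L^j = End(ℂ^D) for some j ≥ 1 (where L^j denotes the span of all products of j elements of L). If H ∈ L^λ is a nonzero matrix with H² = 0 and rank(H) = ρ satisfying λρ ≤ D(1 + log₂(D/ρ)), then either (1) there exist λ₁ ≥ 1 and a matrix H₁ ∈ L^{λ₁} with H₁² = 0 and rank(H₁) = ρ₁ where 1 ≤ ρ₁ ≤ ρ/2 and λ₁ρ₁ ≤ D(1 + log₂(D/ρ₁)), or (2) there exists Λ ≤ λ + 2D/ρ and a non-nilpotent matrix in L^Λ of rank at most ρ. -/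
/-!
Let `t` be the least exponent with `H * A * H ≠ 0` for some `A ∈ L ^ t`; it exists because some
power of `L` is the whole matrix algebra, which is prime.

If `t ≤ 2D/ρ` and `H * A` is not nilpotent, it is the required matrix of rank `≤ ρ` in
`L ^ (λ + t)`. If `H * A` is nilpotent, take the largest `k` with `H₁ = (H * A) ^ k * H ≠ 0`.
It is square-zero, and the ranks of `(H * A) ^ i * H`, `i ≤ k`, drop by at least `rank H₁` at
each step, so `(k + 1) rank H₁ ≤ ρ`. This pays for the extra length `k (λ + t)` of `H₁` because
`2k/(k + 1) ≤ log₂ (k + 1)`.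

If `t > 2D/ρ`, pick `B ∈ L ^ t` with `H * B * H ≠ 0` of least rank `r`. Since `H * X * H = 0` on
`L ^ i` for `0 < i < t`, the spans of the images of `C * H`, `C ∈ L ^ i`, `i ≤ a`, grow by at
least `r` at each step `a < t`, so `ρ + (t - 1) r ≤ D`. Hence `r ≤ D/t < ρ/2`, and the square-zero
matrix `H * B * H ∈ L ^ (2λ + t)` fits in the budget of rank `r`.
-/

open Module Real

section LinearAlgebra

variable {K V W : Type*} [Field K] [AddCommGroup V] [Module K V] [AddCommGroup W] [Module K W]

theorem Submodule.finrank_map_add_finrank_le_of_le_ker [FiniteDimensional K V]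
    {U N : Submodule K V} (f : V →ₗ[K] W) (hNU : N ≤ U) (hN : N ≤ LinearMap.ker f) :
    finrank K (U.map f) + finrank K N ≤ finrank K U := by
  have hker : Submodule.comap U.subtype N ≤ LinearMap.ker (f.domRestrict U) := by
    rw [LinearMap.ker_domRestrict]
    exact Submodule.comap_mono hN
  rw [← LinearMap.finrank_range_add_finrank_ker (f.domRestrict U), LinearMap.range_domRestrict,
    ← (Submodule.comapSubtypeEquivOfLe hNU).finrank_eq]
  exact Nat.add_le_add_left (Submodule.finrank_mono hker) _

end LinearAlgebra

namespace Matrix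

variable {K n : Type*} [Field K] [Fintype n]

theorem rank_pos_of_ne_zero {m : Type*} {A : Matrix m n K} (hA : A ≠ 0) : 0 < A.rank := by
  classical
  rw [Nat.pos_iff_ne_zero]
  intro h
  apply hA
  have := Submodule.finrank_eq_zero.mp h
  rw [LinearMap.range_eq_bot] at this
  exact Matrix.toLin'.injective (by rw [Matrix.toLin'_apply', this, map_zero])

theorem exists_mul_mul_ne_zero {R : Type*} [Semiring R] [NoZeroDivisors R] [DecidableEq n]
    {H : Matrix n n R} (hH : H ≠ 0) : ∃ X, H * X * H ≠ 0 := by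
  obtain ⟨p, q, hpq⟩ : ∃ p q, H p q ≠ 0 := by
    by_contra! h
    exact hH (Matrix.ext h)
  refine ⟨Matrix.single q p 1, fun h => hpq ?_⟩
  have := congrFun₂ h p q
  rw [Matrix.mul_apply, Finset.sum_eq_single p (fun i _ hi => by simp [hi]) (by simp)] at this
  simpa using this

theorem range_mulVecLin_mul_le (A B : Matrix n n K) :
    LinearMap.range (A * B).mulVecLin ≤ LinearMap.range A.mulVecLin := by
  rw [mulVecLin_mul]
  exact LinearMap.range_comp_le_range _ _

theorem range_mulVecLin_mul (A B : Matrix n n K) :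
    LinearMap.range (A * B).mulVecLin = (LinearMap.range B.mulVecLin).map A.mulVecLin := by
  rw [mulVecLin_mul, LinearMap.range_comp]

/-- The ranks `r i` of `(Q * A) ^ i * Q = Q * (A * Q) ^ i` drop by at least `r k` at each step,
as the image of `(Q * A) ^ k * Q` lies in every earlier image and is killed by `Q * A`. -/
theorem succ_mul_rank_pow_mul_le [DecidableEq n] (Q A : Matrix n n K) {k : ℕ}
    (h : (Q * A) ^ (k + 1) * Q = 0) :
    (k + 1) * ((Q * A) ^ k * Q).rank ≤ Q.rank := by
  have hdrop : ∀ i ≤ k, ((Q * A) ^ (i + 1) * Q).rank + ((Q * A) ^ k * Q).rank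
      ≤ ((Q * A) ^ i * Q).rank := by
    intro i hi
    have hle : LinearMap.range ((Q * A) ^ k * Q).mulVecLin
        ≤ LinearMap.range ((Q * A) ^ i * Q).mulVecLin := by
      rw [← Nat.add_sub_cancel' hi, pow_add, mul_assoc, mul_pow_mul, ← mul_assoc]
      exact range_mulVecLin_mul_le _ _
    have hker : LinearMap.range ((Q * A) ^ k * Q).mulVecLin ≤ LinearMap.ker (Q * A).mulVecLin := by
      rintro _ ⟨v, rfl⟩
      rw [LinearMap.mem_ker, ← LinearMap.comp_apply, ← mulVecLin_mul, ← mul_assoc, ← pow_succ', h,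
        mulVecLin_zero, LinearMap.zero_apply]
    have := Submodule.finrank_map_add_finrank_le_of_le_ker _ hle hker
    rwa [← range_mulVecLin_mul, ← mul_assoc, ← pow_succ'] at this
  have hsum : ∀ i ≤ k + 1, ((Q * A) ^ i * Q).rank + i * ((Q * A) ^ k * Q).rank ≤ Q.rank := by
    intro i hi
    induction i with
    | zero => simp
    | succ i ih =>
      have := hdrop i (by omega)
      have := ih (by omega)
      rw [Nat.succ_mul]
      omega
  exact le_of_add_le_right (hsum (k + 1) le_rfl)

end Matrix

theorem IsNilpotent.exists_pow_mul_ne_zero_and_pow_succ_mul_eq_zero {R : Type*} [MonoidWithZero R]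
    {P Q : R} (hP : IsNilpotent P) (hPQ : P * Q ≠ 0) :
    ∃ k, 1 ≤ k ∧ P ^ k * Q ≠ 0 ∧ P ^ (k + 1) * Q = 0 := by
  classical
  have hex : ∃ k, P ^ (k + 1) * Q = 0 := by
    obtain ⟨k, hk⟩ := hP
    exact ⟨k, by rw [_root_.pow_succ, hk, zero_mul, zero_mul]⟩
  obtain ⟨k, hk⟩ : ∃ k, Nat.find hex = k + 1 := Nat.exists_eq_add_one.mpr <|
    Nat.pos_of_ne_zero fun h0 => hPQ (by simpa [h0] using Nat.find_spec hex)
  refine ⟨k + 1, by omega, fun h => ?_, hk ▸ Nat.find_spec hex⟩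
  exact Nat.find_min hex (by omega) h

theorem pow_mul_mul_pow_mul_eq_zero {R : Type*} [Ring R] {H A : R} (hH : H * H = 0) {k : ℕ}
    (hk : k ≠ 0) : (H * A) ^ k * H * ((H * A) ^ k * H) = 0 := by
  obtain ⟨k, rfl⟩ := Nat.exists_eq_succ_of_ne_zero hk
  calc (H * A) ^ (k + 1) * H * ((H * A) ^ (k + 1) * H)
      = (H * A) ^ (k + 1) * (H * H) * (A * (H * A) ^ k * H) := by
        rw [pow_succ' (H * A) k]; noncomm_ring
    _ = 0 := by rw [hH, mul_zero, zero_mul]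

section Filtration

variable {K n : Type*} [Field K] [Fintype n] [DecidableEq n]
  (L : Submodule K (Matrix n n K)) (H : Matrix n n K)

def rangeFiltration (a : ℕ) : Submodule K (n → K) :=
  ⨆ i ≤ a, ⨆ B ∈ L ^ i, LinearMap.range (B * H).mulVecLin

variable {L H}

theorem range_le_rangeFiltration {i a : ℕ} (hia : i ≤ a) {B : Matrix n n K} (hB : B ∈ L ^ i) :
    LinearMap.range (B * H).mulVecLin ≤ rangeFiltration L H a :=
  le_iSup₂_of_le i hia (le_iSup₂_of_le B hB le_rfl)

theorem rangeFiltration_le_iff {a : ℕ} {T : Submodule K (n → K)} :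
    rangeFiltration L H a ≤ T ↔ ∀ i ≤ a, ∀ B ∈ L ^ i, LinearMap.range (B * H).mulVecLin ≤ T := by
  simp only [rangeFiltration, iSup_le_iff]

theorem rangeFiltration_mono : Monotone (rangeFiltration L H) := fun _ _ hab =>
  rangeFiltration_le_iff.mpr fun _ hi _ hB => range_le_rangeFiltration (hi.trans hab) hB

theorem rank_le_finrank_rangeFiltration_zero :
    H.rank ≤ finrank K (rangeFiltration L H 0) := by
  have h1 : (1 : Matrix n n K) ∈ L ^ 0 := by
    rw [pow_zero, Submodule.one_eq_span]
    exact Submodule.mem_span_singleton_self 1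
  have := Submodule.finrank_mono (range_le_rangeFiltration le_rfl h1 (H := H))
  rwa [one_mul] at this

/-- By `hmin`, `H * C` kills the `a`-th step of the filtration, so the image of
`H * C * (C' * H)` is accounted for by the growth from step `a` to step `a + 1`. -/
theorem finrank_rangeFiltration_add_rank_le {a b : ℕ} (hb : 1 ≤ b)
    (hmin : ∀ i, 1 ≤ i → i ≤ a + b → ∀ X ∈ L ^ i, H * X * H = 0)
    {C C' : Matrix n n K} (hC : C ∈ L ^ b) (hC' : C' ∈ L ^ (a + 1)) :
    finrank K (rangeFiltration L H a) + (H * (C * C') * H).rank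
      ≤ finrank K (rangeFiltration L H (a + 1)) := by
  have hker : rangeFiltration L H a ≤ LinearMap.ker (H * C).mulVecLin := by
    refine rangeFiltration_le_iff.mpr fun i hi B hB => ?_
    have hCB : H * (C * B) * H = 0 :=
      hmin (b + i) (by omega) (by omega) _ (pow_add L b i ▸ Submodule.mul_mem_mul hC hB)
    rintro _ ⟨v, rfl⟩
    rw [LinearMap.mem_ker, ← LinearMap.comp_apply, ← Matrix.mulVecLin_mul,
      show H * C * (B * H) = 0 by rw [← hCB]; noncomm_ring, Matrix.mulVecLin_zero,
      LinearMap.zero_apply]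
  have hrange : (H * (C * C') * H).rank
      ≤ finrank K ((rangeFiltration L H (a + 1)).map (H * C).mulVecLin) := by
    rw [show H * (C * C') * H = H * C * (C' * H) by noncomm_ring]
    unfold Matrix.rank
    rw [Matrix.range_mulVecLin_mul]
    exact Submodule.finrank_mono
      (Submodule.map_mono (range_le_rangeFiltration le_rfl hC'))
  have := Submodule.finrank_map_add_finrank_le_of_le_ker _
    (rangeFiltration_mono (Nat.le_add_right a 1)) hker
  omega

theorem exists_mul_sandwich_ne_zero {b c : ℕ} {X : Matrix n n K} (hX : X ∈ L ^ (b + c))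
    (hXH : H * X * H ≠ 0) : ∃ C ∈ L ^ b, ∃ C' ∈ L ^ c, H * (C * C') * H ≠ 0 := by
  by_contra! h
  rw [pow_add] at hX
  refine hXH (Submodule.mul_induction_on hX (fun C hC C' hC' => h C hC C' hC') ?_)
  intro Y Z hY hZ
  rw [mul_add, add_mul, hY, hZ, add_zero]

theorem exists_sandwich_rank_le {s : ℕ}
    (hmin : ∀ i, 1 ≤ i → i ≤ s → ∀ X ∈ L ^ i, H * X * H = 0)
    {A : Matrix n n K} (hA : A ∈ L ^ (s + 1)) (hAH : H * A * H ≠ 0) :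
    ∃ B ∈ L ^ (s + 1), H * B * H ≠ 0 ∧ H.rank + s * (H * B * H).rank ≤ Fintype.card n := by
  obtain ⟨B, ⟨hB, hBH⟩, hBmin⟩ := (InvImage.wf (fun B => (H * B * H).rank) wellFounded_lt).has_min
    {B | B ∈ L ^ (s + 1) ∧ H * B * H ≠ 0} ⟨A, hA, hAH⟩
  refine ⟨B, hB, hBH, ?_⟩
  have hchain : ∀ a ≤ s, H.rank + a * (H * B * H).rank
      ≤ finrank K (rangeFiltration L H a) := by
    intro a ha
    induction a with
    | zero => simpa using rank_le_finrank_rangeFiltration_zero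
    | succ a ih =>
      have hsplit : s - a + (a + 1) = s + 1 := by omega
      obtain ⟨C, hC, C', hC', hne⟩ := exists_mul_sandwich_ne_zero (hsplit ▸ hB) hBH
      have hCC' : C * C' ∈ L ^ (s + 1) := hsplit ▸ pow_add L _ _ ▸ Submodule.mul_mem_mul hC hC'
      have hBC : (H * B * H).rank ≤ (H * (C * C') * H).rank := not_lt.mp (hBmin _ ⟨hCC', hne⟩)
      have hstep := finrank_rangeFiltration_add_rank_le (by omega)
        (fun i hi1 hi => hmin i hi1 (by omega)) hC hC'
      have := ih (by omega)
      rw [Nat.succ_mul]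
      omega
  calc H.rank + s * (H * B * H).rank ≤ finrank K (rangeFiltration L H s) := hchain s le_rfl
    _ ≤ finrank K (n → K) := Submodule.finrank_le _
    _ = Fintype.card n := Module.finrank_fintype_fun_eq_card K

theorem exists_minimal_sandwich (hL : ∃ j ≥ 1, L ^ j = ⊤) (hH : H ≠ 0) :
    ∃ s, ∃ A ∈ L ^ (s + 1), H * A * H ≠ 0 ∧
      ∀ i, 1 ≤ i → i ≤ s → ∀ X ∈ L ^ i, H * X * H = 0 := by
  classical
  obtain ⟨j, hj, hLj⟩ := hL
  have hex : ∃ s, ∃ A ∈ L ^ (s + 1), H * A * H ≠ 0 := by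
    obtain ⟨X, hX⟩ := Matrix.exists_mul_mul_ne_zero hH
    exact ⟨j - 1, X, by rw [Nat.sub_add_cancel hj, hLj]; trivial, hX⟩
  obtain ⟨A, hA, hAH⟩ := Nat.find_spec hex
  refine ⟨Nat.find hex, A, hA, hAH, fun i hi1 his X hX => ?_⟩
  by_contra hne
  exact Nat.find_min hex (show i - 1 < Nat.find hex by omega)
    ⟨X, by rwa [Nat.sub_add_cancel hi1], hne⟩

end Filtration

theorem two_mul_div_add_one_le_logb_add_one {k : ℕ} (hk : 1 ≤ k) :
    2 * (k : ℝ) / (k + 1) ≤ logb 2 (k + 1) := by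
  match k, hk with
  | 1, _ => norm_num
  | 2, _ =>
    have h : log ((2 : ℝ) ^ 4) ≤ log ((3 : ℝ) ^ 3) := log_le_log (by norm_num) (by norm_num)
    rw [log_pow, log_pow] at h
    rw [logb, le_div_iff₀ (log_pos one_lt_two)]
    norm_num at h ⊢
    linarith
  | k + 3, _ =>
    calc 2 * ((k + 3 : ℕ) : ℝ) / ((k + 3 : ℕ) + 1) ≤ 2 := by
          rw [div_le_iff₀ (by positivity)]; linarith
      _ = logb 2 4 := by
          rw [show (4 : ℝ) = 2 ^ (2 : ℕ) by norm_num, logb_pow, logb_self_eq_one one_lt_two]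
          norm_num
      _ ≤ logb 2 ((k + 3 : ℕ) + 1) :=
          logb_le_logb_of_le one_lt_two (by norm_num) (by push_cast; linarith)

theorem le_mul_one_add_logb_div_of_le {D ρ m lam : ℕ} {x : ℝ} (hρ : 0 < ρ) (hm : 0 < m)
    (hbound : (lam : ℝ) * ρ ≤ D * (1 + logb 2 (D / ρ)))
    (hx : x ≤ lam * ρ + D * logb 2 (ρ / m)) : x ≤ D * (1 + logb 2 (D / m)) := by
  rcases Nat.eq_zero_or_pos D with rfl | hD
  · simpa using hx.trans (by simpa using hbound)
  have hsplit : logb 2 ((D : ℝ) / m) = logb 2 ((D : ℝ) / ρ) + logb 2 ((ρ : ℝ) / m) := by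
    have hD' : (D : ℝ) ≠ 0 := by exact_mod_cast hD.ne'
    have hρ' : (ρ : ℝ) ≠ 0 := by exact_mod_cast hρ.ne'
    have hm' : (m : ℝ) ≠ 0 := by exact_mod_cast hm.ne'
    rw [logb_div hD' hm', logb_div hD' hρ', logb_div hρ' hm']
    ring
  rw [hsplit]
  linarith

theorem le_mul_one_add_logb_of_succ_mul_le {D ρ lam t k m : ℕ} (hm : 0 < m) (hk : 1 ≤ k)
    (hkm : (k + 1) * m ≤ ρ) (ht : t * ρ ≤ 2 * D)
    (hbound : (lam : ℝ) * ρ ≤ D * (1 + logb 2 (D / ρ))) :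
    (((lam + t) * k + lam : ℕ) : ℝ) * m ≤ D * (1 + logb 2 (D / m)) := by
  have hkmR : ((k : ℝ) + 1) * m ≤ ρ := by exact_mod_cast hkm
  have htR : (t : ℝ) * ρ ≤ 2 * D := by exact_mod_cast ht
  have hρm : (k : ℝ) + 1 ≤ ρ / m := by rw [le_div_iff₀ (by positivity)]; exact hkmR
  have hlog : 2 * (k : ℝ) / (k + 1) ≤ logb 2 (ρ / m) :=
    (two_mul_div_add_one_le_logb_add_one hk).trans
      (logb_le_logb_of_le one_lt_two (by positivity) hρm)
  have htm : (k : ℝ) * (t * m) ≤ D * (2 * k / (k + 1)) := by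
    rw [mul_div_assoc', le_div_iff₀ (by positivity)]
    nlinarith [mul_le_mul_of_nonneg_left hkmR (Nat.cast_nonneg t : (0 : ℝ) ≤ t)]
  refine le_mul_one_add_logb_div_of_le ((Nat.mul_pos k.succ_pos hm).trans_le hkm) hm hbound ?_
  push_cast
  nlinarith [mul_le_mul_of_nonneg_left hkmR (Nat.cast_nonneg lam : (0 : ℝ) ≤ lam),
    mul_le_mul_of_nonneg_left hlog (Nat.cast_nonneg D : (0 : ℝ) ≤ D)]

theorem le_mul_one_add_logb_of_two_mul_le {D ρ lam t r : ℕ} (hr : 0 < r) (h2r : 2 * r ≤ ρ)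
    (htr : t * r ≤ D) (hbound : (lam : ℝ) * ρ ≤ D * (1 + logb 2 (D / ρ))) :
    ((lam + t + lam : ℕ) : ℝ) * r ≤ D * (1 + logb 2 (D / r)) := by
  have h2rR : 2 * (r : ℝ) ≤ ρ := by exact_mod_cast h2r
  have htrR : (t : ℝ) * r ≤ D := by exact_mod_cast htr
  have hlog : 1 ≤ logb 2 ((ρ : ℝ) / r) := by
    have hρ : (0 : ℝ) < ρ := by exact_mod_cast (by omega : 0 < ρ)
    rw [le_logb_iff_rpow_le one_lt_two (by positivity), rpow_one, le_div_iff₀ (by positivity)]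
    linarith
  refine le_mul_one_add_logb_div_of_le (by omega) hr hbound ?_
  push_cast
  nlinarith [mul_le_mul_of_nonneg_left h2rR (Nat.cast_nonneg lam : (0 : ℝ) ≤ lam),
    mul_le_mul_of_nonneg_left hlog (Nat.cast_nonneg D : (0 : ℝ) ≤ D)]

theorem stmt2_general (D : ℕ) (L : Submodule ℂ (Matrix (Fin D) (Fin D) ℂ))
    (hL : ∃ j ≥ 1, L ^ j = ⊤)
    (lam ρ : ℕ) (H : Matrix (Fin D) (Fin D) ℂ)
    (hHL : H ∈ L ^ lam) (hH0 : H ≠ 0) (hH2 : H * H = 0)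
    (hρ : H.rank = ρ)
    (hbound : (lam : ℝ) * ρ ≤ D * (1 + Real.logb 2 ((D : ℝ) / ρ))) :
    (∃ lam₁ ρ₁ : ℕ, 1 ≤ lam₁ ∧ 1 ≤ ρ₁ ∧ (ρ₁ : ℝ) ≤ (ρ : ℝ) / 2 ∧
        (lam₁ : ℝ) * ρ₁ ≤ D * (1 + Real.logb 2 ((D : ℝ) / ρ₁)) ∧
        ∃ H₁ ∈ L ^ lam₁, H₁ * H₁ = 0 ∧ H₁.rank = ρ₁) ∨
    (∃ Lam : ℕ, (Lam : ℝ) ≤ (lam : ℝ) + 2 * D / ρ ∧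
        ∃ A ∈ L ^ Lam, ¬ IsNilpotent A ∧ A.rank ≤ ρ) := by
  have hρpos : 0 < ρ := hρ ▸ Matrix.rank_pos_of_ne_zero hH0
  have half : ∀ {r : ℕ}, 2 * r ≤ ρ → (r : ℝ) ≤ ρ / 2 := fun h => by
    rw [le_div_iff₀ two_pos]; exact_mod_cast (by omega)
  obtain ⟨s, A, hA, hAH, hmin⟩ := exists_minimal_sandwich hL hH0
  have hHA : H * A ∈ L ^ (lam + (s + 1)) := pow_add L _ _ ▸ Submodule.mul_mem_mul hHL hA
  by_cases hs : (s + 1) * ρ ≤ 2 * D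
  · by_cases hnil : IsNilpotent (H * A)
    · obtain ⟨k, hk, hne, hzero⟩ := hnil.exists_pow_mul_ne_zero_and_pow_succ_mul_eq_zero hAH
      have hkm := hρ ▸ Matrix.succ_mul_rank_pow_mul_le H A hzero
      have hmem : (H * A) ^ k * H ∈ L ^ ((lam + (s + 1)) * k + lam) := by
        rw [pow_add, pow_mul]
        exact Submodule.mul_mem_mul (Submodule.pow_mem_pow _ hHA k) hHL
      have hpos := Matrix.rank_pos_of_ne_zero hne
      exact Or.inl ⟨_, _, by nlinarith, hpos, half (by nlinarith),
        le_mul_one_add_logb_of_succ_mul_le hpos hk hkm hs hbound, _, hmem,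
        pow_mul_mul_pow_mul_eq_zero hH2 (by omega), rfl⟩
    · refine Or.inr ⟨lam + (s + 1), ?_, H * A, hHA, hnil, hρ ▸ Matrix.rank_mul_le_left H A⟩
      have hsR : ((s : ℝ) + 1) * ρ ≤ 2 * D := by exact_mod_cast hs
      push_cast
      rw [add_le_add_iff_left, le_div_iff₀ (by positivity)]
      exact hsR
  · obtain ⟨B, hB, hBH, hcount⟩ := exists_sandwich_rank_le hmin hA hAH
    rw [Fintype.card_fin, hρ] at hcount
    have hr : (H * B * H).rank ≤ ρ :=
      hρ ▸ (Matrix.rank_mul_le_left _ _).trans (Matrix.rank_mul_le_left _ _)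
    have htr : (s + 1) * (H * B * H).rank ≤ D := by nlinarith
    have h2r : 2 * (H * B * H).rank ≤ ρ := by nlinarith
    have hmem : H * B * H ∈ L ^ (lam + (s + 1) + lam) := by
      rw [pow_add, pow_add]
      exact Submodule.mul_mem_mul (Submodule.mul_mem_mul hHL hB) hHL
    have hsq : H * B * H * (H * B * H) = 0 := by
      rw [show H * B * H * (H * B * H) = H * B * (H * H) * B * H by noncomm_ring, hH2]
      simp
    have hpos := Matrix.rank_pos_of_ne_zero hBH
    exact Or.inl ⟨_, _, by omega, hpos, half h2r,
      le_mul_one_add_logb_of_two_mul_le hpos h2r htr hbound, _, hmem, hsq, rfl⟩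

theorem stmt2 (D : ℕ) (L : Submodule ℂ (Matrix (Fin D) (Fin D) ℂ))
    (hL : ∃ j ≥ 1, L ^ j = ⊤)
    (lam ρ : ℕ) (hlam : 1 ≤ lam) (H : Matrix (Fin D) (Fin D) ℂ)
    (hHL : H ∈ L ^ lam) (hH0 : H ≠ 0) (hH2 : H * H = 0)
    (hρ : H.rank = ρ)
    (hbound : (lam : ℝ) * ρ ≤ D * (1 + Real.logb 2 ((D : ℝ) / ρ))) :
    (∃ lam₁ ρ₁ : ℕ, 1 ≤ lam₁ ∧ 1 ≤ ρ₁ ∧ (ρ₁ : ℝ) ≤ (ρ : ℝ) / 2 ∧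
        (lam₁ : ℝ) * ρ₁ ≤ D * (1 + Real.logb 2 ((D : ℝ) / ρ₁)) ∧
        ∃ H₁ ∈ L ^ lam₁, H₁ * H₁ = 0 ∧ H₁.rank = ρ₁) ∨
    (∃ Lam : ℕ, (Lam : ℝ) ≤ (lam : ℝ) + 2 * D / ρ ∧
        ∃ A ∈ L ^ Lam, ¬ IsNilpotent A ∧ A.rank ≤ ρ) :=
  stmt2_general D L hL lam ρ H hHL hH0 hH2 hρ hbound
end

section
/- Let L be a linear subspace of End(ℂ^D) with L^j = End(ℂ^D) for some j, and suppose B ∈ L satisfies Bv = v for a nonzero vector v ∈ ℂ^D. Then L^D · v = ℂ^D, i.e., every vector w ∈ ℂ^D can be written as Wv with W ∈ L^D. -/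
/-! Write `V k = L ^ k · v`. As `B ∈ L` fixes `v`, the `V k` increase, and as `V (k + 1) = L · V k`,
the sequence is constant as soon as two consecutive terms agree. It cannot stall before reaching
`V j`, the whole space; since `V 0 ∋ v` is nonzero, a strict increase at each of the first `D` steps
would push the dimension past `D`, so the whole space is reached by `V D`. -/

open Module Matrix

namespace Submodule

section Chain

variable {K M : Type*} [DivisionRing K] [AddCommGroup M] [Module K M] {V : ℕ → Submodule K M}

theorem eq_of_le_of_succ_eq (hsucc : ∀ k m, V k = V m → V (k + 1) = V (m + 1)) {i : ℕ}
    (hi : V (i + 1) = V i) : ∀ m ≥ i, V m = V i := by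
  intro m hm
  induction m, hm using Nat.le_induction with
  | base => rfl
  | succ m _ ih => rw [hsucc m i ih, hi]

theorem finrank_add_le_finrank_of_lt_succ [FiniteDimensional K M] {n : ℕ}
    (h : ∀ i < n, V i < V (i + 1)) : finrank K (V 0) + n ≤ finrank K (V n) := by
  induction n with
  | zero => rfl
  | succ n ih =>
    have := finrank_lt_finrank_of_lt (h n n.lt_succ_self)
    have := ih fun i hi => h i (by omega)
    omega

theorem le_of_finrank_lt_finrank_zero_add [FiniteDimensional K M] (hmono : Monotone V)
    (hsucc : ∀ k m, V k = V m → V (k + 1) = V (m + 1)) {n : ℕ}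
    (hn : finrank K M < finrank K (V 0) + n) (m : ℕ) : V m ≤ V n := by
  by_cases hstrict : ∀ i < n, V i < V (i + 1)
  · have := finrank_add_le_finrank_of_lt_succ hstrict
    have := (V n).finrank_le
    omega
  push Not at hstrict
  obtain ⟨i, hin, hi⟩ := hstrict
  have hstable := eq_of_le_of_succ_eq hsucc ((hmono i.le_succ).eq_of_not_lt hi).symm
  calc V m ≤ V (max m n) := hmono (le_max_left m n)
    _ = V n := by rw [hstable _ (by omega), hstable _ hin.le]

end Chain

section Orbit

variable {K A M : Type*} [CommSemiring K] [Semiring A] [Algebra K A] [AddCommMonoid M]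
  [Module A M] [Module K M] [IsScalarTower K A M]

/-- The subspace `L ^ k · v` of `M`. -/
def powOrbit (L : Submodule K A) (v : M) (k : ℕ) : Submodule K M :=
  (L ^ k).map ((LinearMap.toSpanSingleton A M v).restrictScalars K)

variable {L : Submodule K A} {v : M} {k m : ℕ}

theorem mem_powOrbit {x : M} : x ∈ L.powOrbit v k ↔ ∃ a ∈ L ^ k, a • v = x := Iff.rfl

theorem smul_mem_powOrbit {a : A} (ha : a ∈ L ^ k) : a • v ∈ L.powOrbit v k := ⟨a, ha, rfl⟩

theorem self_mem_powOrbit_zero : v ∈ L.powOrbit v 0 := by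
  simpa using smul_mem_powOrbit (v := v) (show (1 : A) ∈ L ^ 0 from one_le.mp (pow_zero L).ge)

theorem powOrbit_le_powOrbit_succ {B : A} (hB : B ∈ L) (hBv : B • v = v) (k : ℕ) :
    L.powOrbit v k ≤ L.powOrbit v (k + 1) := by
  intro x hx
  obtain ⟨a, ha, rfl⟩ := mem_powOrbit.mp hx
  have : (a * B) • v ∈ L.powOrbit v (k + 1) := smul_mem_powOrbit (pow_succ L k ▸ mul_mem_mul ha hB)
  rwa [mul_smul, hBv] at this

theorem powOrbit_succ_le_powOrbit_succ (h : L.powOrbit v k ≤ L.powOrbit v m) :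
    L.powOrbit v (k + 1) ≤ L.powOrbit v (m + 1) := by
  intro x hx
  obtain ⟨c, hc, rfl⟩ := mem_powOrbit.mp hx
  rw [pow_succ'] at hc
  refine Submodule.mul_induction_on (C := fun c => c • v ∈ L.powOrbit v (m + 1)) hc ?_ ?_
  · intro a ha b hb
    obtain ⟨b', hb', hbb'⟩ := mem_powOrbit.mp (h (smul_mem_powOrbit hb))
    rw [mul_smul, ← hbb', ← mul_smul]
    exact smul_mem_powOrbit (pow_succ' L m ▸ mul_mem_mul ha hb')
  · intro a b ha hb
    rw [add_smul]
    exact add_mem ha hb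

end Orbit

theorem powOrbit_finrank_eq_top {K A M : Type*} [Field K] [Semiring A] [Algebra K A]
    [AddCommGroup M] [Module A M] [Module K M] [IsScalarTower K A M] [FiniteDimensional K M]
    {L : Submodule K A} {v : M} (hv : v ≠ 0) (hcyclic : ∀ w : M, ∃ a : A, a • v = w) {j : ℕ}
    (hj : L ^ j = ⊤) {B : A} (hB : B ∈ L) (hBv : B • v = v) :
    L.powOrbit v (finrank K M) = ⊤ := by
  have hmono : Monotone (L.powOrbit v) :=
    monotone_nat_of_le_succ (powOrbit_le_powOrbit_succ hB hBv)
  have hsucc (k m : ℕ) (h : L.powOrbit v k = L.powOrbit v m) :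
      L.powOrbit v (k + 1) = L.powOrbit v (m + 1) :=
    le_antisymm (powOrbit_succ_le_powOrbit_succ h.le) (powOrbit_succ_le_powOrbit_succ h.ge)
  have hrank : finrank K M < finrank K (L.powOrbit v 0) + finrank K M := by
    have : 0 < finrank K (L.powOrbit v 0) :=
      finrank_pos_iff_exists_ne_zero.mpr ⟨⟨v, self_mem_powOrbit_zero⟩, by simpa using hv⟩
    omega
  have htop : L.powOrbit v j = ⊤ := eq_top_iff'.mpr fun w => by
    obtain ⟨a, rfl⟩ := hcyclic w
    exact ⟨a, hj ▸ mem_top, rfl⟩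
  exact top_unique (htop ▸ le_of_finrank_lt_finrank_zero_add hmono hsucc hrank j)

end Submodule

theorem Matrix.exists_mulVec_eq {K m n : Type*} [Field K] [Fintype n] {v : n → K} (hv : v ≠ 0)
    (w : m → K) : ∃ A : Matrix m n K, A *ᵥ v = w := by
  classical
  obtain ⟨i, hi⟩ := Function.ne_iff.mp hv
  refine ⟨vecMulVec w (Pi.single i (v i)⁻¹), ?_⟩
  simp [vecMulVec_mulVec, single_dotProduct, inv_mul_cancel₀ hi]

theorem stmt7 (D : ℕ) (L : Submodule ℂ (Matrix (Fin D) (Fin D) ℂ))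
    (hL : ∃ j ≥ 1, L ^ j = ⊤)
    (B : Matrix (Fin D) (Fin D) ℂ) (hB : B ∈ L)
    (v : Fin D → ℂ) (hv : v ≠ 0) (hBv : B.mulVec v = v) :
    ∀ w : Fin D → ℂ, ∃ W ∈ L ^ D, W.mulVec v = w := by
  obtain ⟨j, -, hj⟩ := hL
  have htop := Submodule.powOrbit_finrank_eq_top hv (Matrix.exists_mulVec_eq hv) hj hB hBv
  rw [finrank_fin_fun] at htop
  intro w
  exact (Submodule.eq_top_iff'.mp htop w : w ∈ L.powOrbit v D)
end

section
/- Let L be a linear subspace of D×D complex matrices. If L^j = 0 for some positive integer j, then L^D = 0. -/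
/-!
Let `W k = L^k • V` be the subspace of `V = ℂ^D` spanned by the images of products of `k` elements
of `L`. This is the orbit of `⊤` under the monotone map `W ↦ L • W`, so it is a decreasing chain,
and it never stalls before reaching `0`: a fixed point `W` of `W ↦ L • W` satisfies
`W = L^j • W ≤ L^j • V = 0`. Hence the dimension drops at every step until the chain vanishes,
which happens after at most `D` steps; as matrices act faithfully on `V`, `L^D • V = 0` gives
`L^D = 0`.
-/

open Module

namespace Monotone

theorem eq_bot_of_isFixedPt {α : Type*} [PartialOrder α] [BoundedOrder α] {f : α → α}
    (hf : Monotone f) {j : ℕ} (hj : f^[j] ⊤ = ⊥) {x : α} (hx : Function.IsFixedPt f x) :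
    x = ⊥ := by
  rw [← le_bot_iff, ← hj, ← Function.iterate_fixed hx j]
  exact hf.iterate j le_top

variable {K V : Type*} [Field K] [AddCommGroup V] [Module K V] [FiniteDimensional K V]
  {f : Submodule K V → Submodule K V}

theorem finrank_iterate_top_le (hf : Monotone f) {j : ℕ} (hj : f^[j] ⊤ = ⊥) (k : ℕ) :
    finrank K (f^[k] ⊤) ≤ finrank K V - k := by
  induction k with
  | zero => exact (Submodule.finrank_le _).trans_eq (Nat.sub_zero _).symm
  | succ k ih =>
    have hle : f^[k + 1] ⊤ ≤ f^[k] ⊤ := hf.antitone_iterate_of_map_le le_top k.le_succ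
    by_cases hfix : f^[k + 1] ⊤ = f^[k] ⊤
    · have hfixed : Function.IsFixedPt f (f^[k] ⊤) := by
        rwa [Function.iterate_succ_apply'] at hfix
      rw [hfix, hf.eq_bot_of_isFixedPt hj hfixed, finrank_bot]
      exact Nat.zero_le _
    · have := Submodule.finrank_lt_finrank_of_lt (lt_of_le_of_ne hle hfix)
      omega

theorem iterate_finrank_top_eq_bot (hf : Monotone f) {j : ℕ} (hj : f^[j] ⊤ = ⊥) :
    f^[finrank K V] ⊤ = ⊥ := by
  rw [← Submodule.finrank_eq_zero, ← Nat.le_zero, ← Nat.sub_self (finrank K V)]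
  exact hf.finrank_iterate_top_le hj _

end Monotone

namespace Submodule

variable {K A M : Type*} [Field K] [Ring A] [Algebra K A] [AddCommGroup M] [Module K M]
  [Module A M] [IsScalarTower K A M]

theorem pow_smul_top_eq_iterate (L : Submodule K A) (k : ℕ) :
    L ^ k • (⊤ : Submodule K M) = (L • ·)^[k] ⊤ := by
  induction k with
  | zero => exact Submodule.one_smul _
  | succ k ih =>
    rw [pow_succ', ← smul_eq_mul, Submodule.smul_assoc, ih, Function.iterate_succ_apply']

theorem eq_bot_of_smul_top_eq_bot [FaithfulSMul A M] {L : Submodule K A}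
    (h : L • (⊤ : Submodule K M) = ⊥) : L = ⊥ := by
  refine (Submodule.eq_bot_iff L).2 fun a ha => eq_of_smul_eq_smul (α := M) fun m => ?_
  rw [zero_smul, ← mem_bot K, ← h]
  exact smul_mem_smul ha mem_top

variable (M) in
theorem pow_finrank_eq_bot_of_pow_eq_bot [FiniteDimensional K M] [FaithfulSMul A M]
    {L : Submodule K A} {j : ℕ} (h : L ^ j = ⊥) : L ^ finrank K M = ⊥ := by
  have hmono : Monotone fun W : Submodule K M => L • W := fun _ _ => smul_mono le_rfl
  refine eq_bot_of_smul_top_eq_bot (M := M) ?_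
  rw [pow_smul_top_eq_iterate]
  exact hmono.iterate_finrank_top_eq_bot (by rw [← pow_smul_top_eq_iterate, h, bot_smul])

end Submodule

instance Matrix.faithfulSMul_fun {n R : Type*} [Fintype n] [DecidableEq n] [Semiring R] :
    FaithfulSMul (Matrix n n R) (n → R) :=
  ⟨Matrix.ext_iff_smul.2⟩

theorem stmt8_general (D : ℕ) (L : Submodule ℂ (Matrix (Fin D) (Fin D) ℂ))
    (j : ℕ) (h : L ^ j = ⊥) :
    L ^ D = ⊥ := by
  simpa using Submodule.pow_finrank_eq_bot_of_pow_eq_bot (Fin D → ℂ) h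

theorem stmt8 (D : ℕ) (L : Submodule ℂ (Matrix (Fin D) (Fin D) ℂ))
    (j : ℕ) (hj : 1 ≤ j) (h : L ^ j = ⊥) :
    L ^ D = ⊥ :=
  stmt8_general D L j h
end

section
/- Let S be a linear subspace of End(ℂ^D) that is an algebra (closed under multiplication) consisting entirely of nilpotent matrices. Then the product of any D elements of S is zero. -/
/-!
The commutator of two elements of `S` lies in `S`, so `S` is a Lie algebra of nilpotent
endomorphisms of `ℂ^D` and, by Engel's theorem, `ℂ^D` is a nilpotent Lie module over it.
A product of `k` elements of `S` maps `ℂ^D` into the `k`-th term of the lower central series,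
and that series descends strictly until it vanishes, so its `D`-th term is already zero.
-/

open Module

attribute [local instance] LieRing.ofAssociativeRing

theorem iterate_eq_bot_of_strictMono {α : Type*} [PartialOrder α] [OrderBot α] {f : α → α}
    (hf : ∀ a, f a ≤ a) {μ : α → ℕ} (hμ : StrictMono μ) {a : α} {k : ℕ} (hk : f^[k] a = ⊥) :
    f^[μ a] a = ⊥ := by
  have hbot : ∀ n, f^[n] ⊥ = ⊥ := Function.iterate_fixed (le_bot_iff.mp (hf ⊥))
  -- a fixed point of `f` on the orbit of `a` is `⊥`, so the orbit descends strictly until `⊥`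
  have descent : ∀ n, f^[n] a = ⊥ ∨ n + μ (f^[n] a) ≤ μ a := by
    intro n
    induction n with
    | zero => simp
    | succ n ih =>
      rw [Function.iterate_succ_apply']
      rcases ih with hn | hn
      · exact .inl (by rw [hn]; exact hbot 1)
      by_cases hfix : f (f^[n] a) = f^[n] a
      · refine .inl (hfix.trans ?_)
        calc f^[n] a = f^[k] (f^[n] a) := (Function.iterate_fixed hfix k).symm
          _ = f^[n] (f^[k] a) := by
            rw [← Function.iterate_add_apply, add_comm, Function.iterate_add_apply]
          _ = ⊥ := by rw [hk, hbot]
      · have := hμ (lt_of_le_of_ne (hf _) hfix)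
        exact .inr (by omega)
  rcases descent (μ a) with h | h
  · exact h
  by_contra hne
  have := hμ (bot_lt_iff_ne_bot.mpr hne)
  omega

def Submodule.toLieSubalgebra {R A : Type*} [CommRing R] [Ring A] [Algebra R A]
    (S : Submodule R A) (hmul : ∀ a ∈ S, ∀ b ∈ S, a * b ∈ S) : LieSubalgebra R A where
  __ := S
  lie_mem' {a b} ha hb := by
    rw [Ring.lie_def]
    exact sub_mem (hmul a ha b hb) (hmul b hb a ha)

namespace LieModule

theorem list_prod_toEnd_mem_lowerCentralSeries {R L M : Type*} [CommRing R] [LieRing L]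
    [LieAlgebra R L] [AddCommGroup M] [Module R M] [LieRingModule L M] [LieModule R L M]
    (l : List L) (m : M) :
    (l.map (toEnd R L M)).prod m ∈ lowerCentralSeries R L M l.length := by
  induction l with
  | nil => simp
  | cons x l ih =>
    rw [List.map_cons, List.prod_cons, Module.End.mul_apply, List.length_cons,
      lowerCentralSeries_succ]
    exact LieSubmodule.lie_mem_lie (LieSubmodule.mem_top x) ih

variable {K L M : Type*} [Field K] [LieRing L] [LieAlgebra K L] [AddCommGroup M] [Module K M]
  [LieRingModule L M] [LieModule K L M] [FiniteDimensional K M] [IsNilpotent L M]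

theorem lowerCentralSeries_finrank_eq_bot : lowerCentralSeries K L M (finrank K M) = ⊥ := by
  obtain ⟨k, hk⟩ := IsNilpotent.nilpotent K L M
  have hμ : StrictMono fun N : LieSubmodule K L M ↦ finrank K (N : Submodule K M) :=
    fun _ _ h ↦ Submodule.finrank_lt_finrank_of_lt h
  have := iterate_eq_bot_of_strictMono (fun N ↦ LieSubmodule.lie_le_right N ⊤) hμ hk
  rwa [LieSubmodule.top_toSubmodule, finrank_top] at this

theorem list_prod_toEnd_eq_zero (l : List L) (hl : finrank K M ≤ l.length) :
    (l.map (toEnd K L M)).prod = 0 := by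
  ext m
  have hbot := antitone_lowerCentralSeries K L M hl
  rw [lowerCentralSeries_finrank_eq_bot, le_bot_iff] at hbot
  simpa [hbot] using list_prod_toEnd_mem_lowerCentralSeries (R := K) l m

end LieModule

theorem Module.End.list_prod_eq_zero_of_forall_isNilpotent {K V : Type*} [Field K]
    [AddCommGroup V] [Module K V] [FiniteDimensional K V] (S : Submodule K (Module.End K V))
    (hmul : ∀ f ∈ S, ∀ g ∈ S, f * g ∈ S) (hnil : ∀ f ∈ S, IsNilpotent f)
    (l : List (Module.End K V)) (hl : ∀ f ∈ l, f ∈ S) (hlen : finrank K V ≤ l.length) :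
    l.prod = 0 := by
  let L := S.toLieSubalgebra hmul
  have : LieModule.IsNilpotent L V :=
    (LieModule.isNilpotent_iff_forall' (R := K)).mpr fun x ↦ hnil x x.2
  lift l to List L using hl
  have hval : ⇑(LieModule.toEnd K L V) = Subtype.val := by ext; rfl
  rw [← hval]
  exact LieModule.list_prod_toEnd_eq_zero l (by simpa using hlen)

theorem Matrix.list_prod_eq_zero_of_forall_isNilpotent {K n : Type*} [Field K] [Fintype n]
    [DecidableEq n] (S : Submodule K (Matrix n n K))
    (hmul : ∀ A ∈ S, ∀ B ∈ S, A * B ∈ S) (hnil : ∀ A ∈ S, IsNilpotent A)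
    (l : List (Matrix n n K)) (hl : ∀ A ∈ l, A ∈ S) (hlen : Fintype.card n ≤ l.length) :
    l.prod = 0 := by
  let φ : Matrix n n K ≃ₐ[K] Module.End K (n → K) := Matrix.toLinAlgEquiv'
  apply φ.injective
  rw [map_list_prod, map_zero]
  refine Module.End.list_prod_eq_zero_of_forall_isNilpotent (S.map φ.toLinearMap) ?_ ?_ _ ?_ ?_
  · rintro _ ⟨A, hA, rfl⟩ _ ⟨B, hB, rfl⟩
    exact ⟨A * B, hmul A hA B hB, map_mul φ A B⟩
  · rintro _ ⟨A, hA, rfl⟩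
    exact (hnil A hA).map φ
  · simp only [List.mem_map]
    rintro _ ⟨A, hA, rfl⟩
    exact ⟨A, hl A hA, rfl⟩
  · simpa using hlen

theorem stmt11 (D : ℕ) (S : Submodule ℂ (Matrix (Fin D) (Fin D) ℂ))
    (hmul : ∀ A ∈ S, ∀ B ∈ S, A * B ∈ S)
    (hnil : ∀ A ∈ S, IsNilpotent A) :
    ∀ l : List (Matrix (Fin D) (Fin D) ℂ),
      (∀ A ∈ l, A ∈ S) → l.length = D → l.prod = 0 :=
  fun l hl hlen ↦ Matrix.list_prod_eq_zero_of_forall_isNilpotent S hmul hnil l hl (by simp [hlen])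
end

section
/- Let B be a D×D complex matrix in Jordan normal form whose first s diagonal entries (eigenvalues) are nonzero and remaining eigenvalues are zero, and let P be the orthogonal projector onto the span of the first s standard basis vectors. Let L be a linear subspace of End(ℂ^D) containing B with L^j = End(ℂ^D) for some j. Define M̃_j := P·L^j (the space of matrices PA with A ∈ L^j). Then dim M̃_{sD} = sD, i.e., P·L^{sD} equals the full space of linear maps from ℂ^D to the range of P. -/
/-!
Write `M̃ n := P·L^n`, encoded as the submodule product `(K ∙ P) * L ^ n`. Since `B ∈ L`
commutes with `P`, we have `B·M̃ n ⊆ M̃ (n+1)`, and left multiplication by `B` is injective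
on `P·End(ℂ^D)` (the top-left `s × s` block of `B` is invertible), so `dim M̃ n` is
nondecreasing. If `dim M̃ (n+1) = dim M̃ n`, then `M̃ (n+1) = B·M̃ n`, hence
`M̃ (n+2) = M̃ (n+1)·L = B·M̃ n·L = B·M̃ (n+1)`, and the dimension stays constant forever.
But `M̃ n = P·End(ℂ^D)` once `L^n = End(ℂ^D)`, so the dimension increases strictly until it
reaches `dim P·End(ℂ^D) ≤ sD`.
-/

open Module

namespace Submodule

section Products

variable {R A : Type*} [CommSemiring R] [Semiring A] [Algebra R A]

theorem pow_eq_top_of_le {L : Submodule R A} {j m : ℕ} (hj : 1 ≤ j)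
    (hL : L ^ j = ⊤) (hjm : j ≤ m) : L ^ m = ⊤ := by
  induction m, hjm using Nat.le_induction with
  | base => exact hL
  | succ m _ ih =>
    refine eq_top_iff.2 ?_
    calc ⊤ = L ^ (j - 1) * L := by rw [← pow_succ, Nat.sub_add_cancel hj, hL]
      _ ≤ L ^ m * L := by rw [ih]; exact mul_le_mul_left le_top _
      _ = L ^ (m + 1) := (pow_succ L m).symm

theorem span_singleton_mul_span_singleton_mul_le {P B : A} (hPB : Commute P B)
    {L : Submodule R A} (hB : B ∈ L) (N : Submodule R A) :
    (R ∙ B) * ((R ∙ P) * N) ≤ (R ∙ P) * (L * N) := by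
  calc (R ∙ B) * ((R ∙ P) * N) = (R ∙ P) * (R ∙ B) * N := by
        rw [← mul_assoc, span_mul_span, span_mul_span, Set.singleton_mul_singleton,
          Set.singleton_mul_singleton, hPB.eq]
    _ ≤ (R ∙ P) * L * N := by
        gcongr
        exact span_le.2 (Set.singleton_subset_iff.2 hB)
    _ = (R ∙ P) * (L * N) := mul_assoc _ _ _

theorem span_singleton_mul_le_mul_top (P : A) (N : Submodule R A) :
    (R ∙ P) * N ≤ (R ∙ P) * (⊤ : Submodule R A) :=
  mul_le_mul_right le_top _

end Products

theorem finrank_span_singleton_mul {K A : Type*} [Field K] [Ring A] [Algebra K A]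
    {B : A} {N : Submodule K A} (hB : Set.InjOn (B * ·) N) :
    finrank K ((K ∙ B) * N) = finrank K N := by
  have hrange : (K ∙ B) * N = LinearMap.range ((LinearMap.mulLeft K B).domRestrict N) := by
    ext x
    simp [mem_span_singleton_mul]
  rw [hrange, LinearMap.finrank_range_of_inj]
  intro x y h
  exact Subtype.ext (hB x.2 y.2 h)

section Growth

variable {K A : Type*} [Field K] [Ring A] [Algebra K A] [FiniteDimensional K A]
  {P B : A} {L : Submodule K A}

theorem finrank_span_singleton_mul_pow_le_succ (hPB : Commute P B) (hB : B ∈ L)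
    (hinj : Set.InjOn (B * ·) ((K ∙ P) * (⊤ : Submodule K A))) (n : ℕ) :
    finrank K ((K ∙ P) * L ^ n) ≤ finrank K ((K ∙ P) * L ^ (n + 1)) := by
  rw [← finrank_span_singleton_mul (hinj.mono (span_singleton_mul_le_mul_top P _))]
  apply finrank_mono
  rw [pow_succ']
  exact span_singleton_mul_span_singleton_mul_le hPB hB _

theorem span_singleton_mul_pow_add_succ (hPB : Commute P B) (hB : B ∈ L)
    (hinj : Set.InjOn (B * ·) ((K ∙ P) * (⊤ : Submodule K A))) {n : ℕ}
    (hn : finrank K ((K ∙ P) * L ^ (n + 1)) ≤ finrank K ((K ∙ P) * L ^ n)) (k : ℕ) :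
    (K ∙ P) * L ^ (n + k + 1) = (K ∙ B) * ((K ∙ P) * L ^ (n + k)) := by
  induction k with
  | zero =>
    refine (eq_of_le_of_finrank_le ?_ ?_).symm
    · rw [pow_succ']
      exact span_singleton_mul_span_singleton_mul_le hPB hB _
    · rwa [finrank_span_singleton_mul (hinj.mono (span_singleton_mul_le_mul_top P _))]
  | succ k ih =>
    calc (K ∙ P) * L ^ (n + (k + 1) + 1) = (K ∙ P) * L ^ (n + k + 1) * L := by
          rw [← add_assoc, pow_succ, mul_assoc]
      _ = (K ∙ B) * ((K ∙ P) * L ^ (n + k) * L) := by rw [ih, mul_assoc]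
      _ = (K ∙ B) * ((K ∙ P) * L ^ (n + (k + 1))) := by
          rw [mul_assoc, ← pow_succ, add_assoc]

theorem finrank_span_singleton_mul_pow_add (hPB : Commute P B) (hB : B ∈ L)
    (hinj : Set.InjOn (B * ·) ((K ∙ P) * (⊤ : Submodule K A))) {n : ℕ}
    (hn : finrank K ((K ∙ P) * L ^ (n + 1)) ≤ finrank K ((K ∙ P) * L ^ n)) (k : ℕ) :
    finrank K ((K ∙ P) * L ^ (n + k)) = finrank K ((K ∙ P) * L ^ n) := by
  induction k with
  | zero => rfl
  | succ k ih =>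
    rw [← add_assoc, span_singleton_mul_pow_add_succ hPB hB hinj hn,
      finrank_span_singleton_mul (hinj.mono (span_singleton_mul_le_mul_top P _)), ih]

theorem min_le_finrank_span_singleton_mul_pow (hPB : Commute P B) (hB : B ∈ L)
    (hinj : Set.InjOn (B * ·) ((K ∙ P) * (⊤ : Submodule K A))) {j : ℕ} (hj : 1 ≤ j)
    (hL : L ^ j = ⊤) (n : ℕ) :
    min n (finrank K ((K ∙ P) * (⊤ : Submodule K A))) ≤ finrank K ((K ∙ P) * L ^ n) := by
  induction n with
  | zero => simp
  | succ n ih =>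
    have hmono := finrank_span_singleton_mul_pow_le_succ hPB hB hinj n
    by_contra! hlt
    have hstall : finrank K ((K ∙ P) * L ^ (n + 1)) ≤ finrank K ((K ∙ P) * L ^ n) := by
      omega
    have hconst := finrank_span_singleton_mul_pow_add hPB hB hinj hstall j
    rw [pow_eq_top_of_le hj hL (Nat.le_add_left j n)] at hconst
    omega

theorem span_singleton_mul_pow_eq_mul_top_of_finrank_le (hPB : Commute P B) (hB : B ∈ L)
    (hinj : Set.InjOn (B * ·) ((K ∙ P) * (⊤ : Submodule K A))) {j : ℕ} (hj : 1 ≤ j)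
    (hL : L ^ j = ⊤) {n : ℕ} (hn : finrank K ((K ∙ P) * (⊤ : Submodule K A)) ≤ n) :
    (K ∙ P) * L ^ n = (K ∙ P) * (⊤ : Submodule K A) := by
  refine eq_of_le_of_finrank_le (span_singleton_mul_le_mul_top P _) ?_
  have := min_le_finrank_span_singleton_mul_pow hPB hB hinj hj hL n
  omega

end Growth

end Submodule

namespace Matrix

section FirstRows

variable {K : Type*} [Field K] {D s : ℕ}

variable (K D s) in
def firstRowsProj : Matrix (Fin D) (Fin D) K :=
  diagonal fun i => if (i : ℕ) < s then 1 else 0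

theorem of_eq_firstRowsProj :
    of (fun i j : Fin D => if i = j ∧ (i : ℕ) < s then (1 : K) else 0) =
      firstRowsProj K D s := by
  ext i j
  by_cases h : i = j <;> simp [firstRowsProj, h]

theorem firstRowsProj_mul_apply (A : Matrix (Fin D) (Fin D) K) (i j : Fin D) :
    (firstRowsProj K D s * A) i j = if (i : ℕ) < s then A i j else 0 := by
  simp [firstRowsProj, diagonal_mul]

theorem mul_firstRowsProj_apply (A : Matrix (Fin D) (Fin D) K) (i j : Fin D) :
    (A * firstRowsProj K D s) i j = if (j : ℕ) < s then A i j else 0 := by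
  simp [firstRowsProj, mul_diagonal]

theorem mem_span_firstRowsProj_mul_top {M : Matrix (Fin D) (Fin D) K} :
    M ∈ (K ∙ firstRowsProj K D s) * (⊤ : Submodule K (Matrix (Fin D) (Fin D) K)) ↔
      ∀ i j : Fin D, s ≤ (i : ℕ) → M i j = 0 := by
  rw [Submodule.mem_span_singleton_mul]
  constructor
  · rintro ⟨A, -, rfl⟩ i j hi
    simp [firstRowsProj_mul_apply, not_lt.2 hi]
  · refine fun hM => ⟨M, trivial, ?_⟩
    ext i j
    rw [firstRowsProj_mul_apply]
    split_ifs with hi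
    · rfl
    · exact (hM i j (not_lt.1 hi)).symm

theorem finrank_span_firstRowsProj_mul_top_le (hs : s ≤ D) :
    Module.finrank K ((K ∙ firstRowsProj K D s) * (⊤ : Submodule K (Matrix (Fin D) (Fin D) K)))
      ≤ s * D := by
  let firstRows : Matrix (Fin D) (Fin D) K →ₗ[K] Matrix (Fin s) (Fin D) K :=
    { toFun := fun M => M.submatrix (Fin.castLE hs) id
      map_add' := fun _ _ => rfl
      map_smul' := fun _ _ => rfl }
  have hinj : Function.Injective (firstRows.domRestrict
      ((K ∙ firstRowsProj K D s) * (⊤ : Submodule K (Matrix (Fin D) (Fin D) K)))) := by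
    intro x y hxy
    ext i j
    by_cases hi : (i : ℕ) < s
    · exact congrFun₂ hxy ⟨i, hi⟩ j
    · rw [mem_span_firstRowsProj_mul_top.1 x.2 i j (not_lt.1 hi),
        mem_span_firstRowsProj_mul_top.1 y.2 i j (not_lt.1 hi)]
  simpa [Module.finrank_matrix] using LinearMap.finrank_le_finrank_of_injective hinj

theorem commute_firstRowsProj {B : Matrix (Fin D) (Fin D) K}
    (hB : ∀ i j : Fin D, B i j ≠ 0 → ((i : ℕ) < s ↔ (j : ℕ) < s)) :
    Commute (firstRowsProj K D s) B := by
  ext i j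
  rw [firstRowsProj_mul_apply, mul_firstRowsProj_apply]
  by_cases hij : B i j = 0
  · simp [hij]
  · simp [hB i j hij]

end FirstRows

section UpperBidiagonal

variable {K : Type*} [Field K] {D s : ℕ} {B : Matrix (Fin D) (Fin D) K}

-- No Jordan block straddles the index `s`.
theorem lt_iff_lt_of_apply_ne_zero
    (hJordan : ∀ i j : Fin D, B i j ≠ 0 → j = i ∨ (j : ℕ) = (i : ℕ) + 1)
    (hBlock : ∀ i j : Fin D, (j : ℕ) = (i : ℕ) + 1 → B i j ≠ 0 → B i i = B j j)
    (hDiag1 : ∀ i : Fin D, (i : ℕ) < s → B i i ≠ 0)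
    (hDiag2 : ∀ i : Fin D, s ≤ (i : ℕ) → B i i = 0)
    {i j : Fin D} (hij : B i j ≠ 0) : (i : ℕ) < s ↔ (j : ℕ) < s := by
  rcases hJordan i j hij with rfl | hj
  · rfl
  · refine ⟨fun hi => ?_, fun _ => by omega⟩
    by_contra hjs
    exact hDiag1 i hi ((hBlock i j hj hij).trans (hDiag2 j (not_lt.1 hjs)))

theorem eq_zero_of_upperBidiagonal_mul_eq_zero
    (hJordan : ∀ i j : Fin D, B i j ≠ 0 → j = i ∨ (j : ℕ) = (i : ℕ) + 1)
    (hDiag1 : ∀ i : Fin D, (i : ℕ) < s → B i i ≠ 0)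
    {M : Matrix (Fin D) (Fin D) K} (hM : ∀ i j : Fin D, s ≤ (i : ℕ) → M i j = 0)
    (hBM : B * M = 0) : M = 0 := by
  -- Row `i < s` of `B * M` is `B i i • M i + B i (i+1) • M (i+1)`, so rows vanish bottom-up.
  have hrows : ∀ n (i j : Fin D), s ≤ (i : ℕ) + n → M i j = 0 := by
    intro n
    induction n with
    | zero => exact hM
    | succ n ih =>
      intro i j hin
      rcases le_or_gt s i with hi | hi
      · exact hM i j hi
      have hentry : (B * M) i j = B i i * M i j := by
        rw [mul_apply]
        refine Finset.sum_eq_single i (fun k _ hki => ?_)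
          (fun hi => (hi (Finset.mem_univ i)).elim)
        rcases eq_or_ne (B i k) 0 with hB | hB
        · rw [hB, zero_mul]
        · have hk := (hJordan i k hB).resolve_left hki
          rw [ih k j (by omega), mul_zero]
      rw [hBM, zero_apply, eq_comm] at hentry
      exact (mul_eq_zero.1 hentry).resolve_left (hDiag1 i hi)
  ext i j
  exact hrows s i j (Nat.le_add_left s i)

theorem injOn_upperBidiagonal_mul
    (hJordan : ∀ i j : Fin D, B i j ≠ 0 → j = i ∨ (j : ℕ) = (i : ℕ) + 1)
    (hDiag1 : ∀ i : Fin D, (i : ℕ) < s → B i i ≠ 0) :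
    Set.InjOn (B * ·)
      ((K ∙ firstRowsProj K D s) * (⊤ : Submodule K (Matrix (Fin D) (Fin D) K))) := by
  intro x hx y hy hxy
  rw [← sub_eq_zero]
  refine eq_zero_of_upperBidiagonal_mul_eq_zero hJordan hDiag1
    (mem_span_firstRowsProj_mul_top.1 (sub_mem hx hy)) ?_
  rw [mul_sub]
  exact sub_eq_zero.2 hxy

end UpperBidiagonal

end Matrix

open Matrix Submodule

theorem stmt13_general (D s : ℕ) (hs : s ≤ D)
    (B : Matrix (Fin D) (Fin D) ℂ)
    -- B is in Jordan normal form: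
    (hJordan : ∀ i j : Fin D, B i j ≠ 0 → j = i ∨ (j : ℕ) = (i : ℕ) + 1)
    (hBlock : ∀ i j : Fin D, (j : ℕ) = (i : ℕ) + 1 → B i j ≠ 0 → B i i = B j j)
    -- the first s eigenvalues are nonzero, the rest are zero:
    (hDiag1 : ∀ i : Fin D, (i : ℕ) < s → B i i ≠ 0)
    (hDiag2 : ∀ i : Fin D, s ≤ (i : ℕ) → B i i = 0)
    (P : Matrix (Fin D) (Fin D) ℂ)
    (hP : P = Matrix.of fun i j : Fin D => if i = j ∧ (i : ℕ) < s then 1 else 0)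
    (L : Submodule ℂ (Matrix (Fin D) (Fin D) ℂ)) (hBL : B ∈ L)
    (hL : ∃ j ≥ 1, L ^ j = ⊤) :
    {M : Matrix (Fin D) (Fin D) ℂ | ∃ A ∈ L ^ (s * D), P * A = M} =
      {M : Matrix (Fin D) (Fin D) ℂ | ∀ i j : Fin D, s ≤ (i : ℕ) → M i j = 0} := by
  obtain ⟨j, hj, hLj⟩ := hL
  rw [of_eq_firstRowsProj] at hP
  subst hP
  have hcomm : Commute (firstRowsProj ℂ D s) B :=
    commute_firstRowsProj fun _ _ => lt_iff_lt_of_apply_ne_zero hJordan hBlock hDiag1 hDiag2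
  have hfull := span_singleton_mul_pow_eq_mul_top_of_finrank_le hcomm hBL
    (injOn_upperBidiagonal_mul hJordan hDiag1) hj hLj (finrank_span_firstRowsProj_mul_top_le hs)
  ext M
  rw [Set.mem_ofPred_eq, Set.mem_ofPred_eq, ← mem_span_singleton_mul, hfull,
    mem_span_firstRowsProj_mul_top]

theorem stmt13 (D s : ℕ) (hs : s ≤ D)
    (B : Matrix (Fin D) (Fin D) ℂ)
    -- B is in Jordan normal form:
    (hJordan : ∀ i j : Fin D, B i j ≠ 0 → j = i ∨ (j : ℕ) = (i : ℕ) + 1)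
    (hSuper : ∀ i j : Fin D, (j : ℕ) = (i : ℕ) + 1 → B i j = 0 ∨ B i j = 1)
    (hBlock : ∀ i j : Fin D, (j : ℕ) = (i : ℕ) + 1 → B i j ≠ 0 → B i i = B j j)
    -- the first s eigenvalues are nonzero, the rest are zero:
    (hDiag1 : ∀ i : Fin D, (i : ℕ) < s → B i i ≠ 0)
    (hDiag2 : ∀ i : Fin D, s ≤ (i : ℕ) → B i i = 0)
    (P : Matrix (Fin D) (Fin D) ℂ)
    (hP : P = Matrix.of fun i j : Fin D => if i = j ∧ (i : ℕ) < s then 1 else 0)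
    (L : Submodule ℂ (Matrix (Fin D) (Fin D) ℂ)) (hBL : B ∈ L)
    (hL : ∃ j ≥ 1, L ^ j = ⊤) :
    {M : Matrix (Fin D) (Fin D) ℂ | ∃ A ∈ L ^ (s * D), P * A = M} =
      {M : Matrix (Fin D) (Fin D) ℂ | ∀ i j : Fin D, s ≤ (i : ℕ) → M i j = 0} :=
  stmt13_general D s hs B hJordan hBlock hDiag1 hDiag2 P hP L hBL hL
end

section
/- Let H be a D×D complex matrix with H² = 0 and rank(H) = ρ; write H in a basis where H = [[0,0,I_ρ],[0,0,0],[0,0,0]] in block form, and let A be a D×D matrix whose bottom-left ρ×ρ block A' (i.e., PAQ with P = (0|0|I_ρ) and Q = (I_ρ|0|0)^T) is nilpotent of index α > 1. Then H₁ := (HA)^{α−1}H satisfies H₁² = 0 and 0 < rank(H₁) ≤ ρ/α. -/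
open Matrix

lemma key17 {V W : Type*} [AddCommGroup V] [Module ℂ V] [AddCommGroup W] [Module ℂ W]
    [FiniteDimensional ℂ V] (f : V →ₗ[ℂ] W) (U : Submodule ℂ V) :
    Module.finrank ℂ (U.map f) + Module.finrank ℂ ((LinearMap.ker f ⊓ U : Submodule ℂ V)) =
      Module.finrank ℂ U := by
  have h := LinearMap.finrank_range_add_finrank_ker (f.domRestrict U)
  rw [LinearMap.range_domRestrict, LinearMap.ker_domRestrict] at h
  rw [← h]
  congr 1
  rw [← Submodule.finrank_map_subtype_eq U (Submodule.comap U.subtype (LinearMap.ker f)),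
    Submodule.map_comap_subtype, inf_comm]

lemma frob17 {k : ℕ} (A B C : Matrix (Fin k) (Fin k) ℂ) :
    (A * B).rank + (B * C).rank ≤ (A * B * C).rank + B.rank := by
  set f := A.mulVecLin
  set g := B.mulVecLin
  set h := C.mulVecLin
  have e1 : (A * B).rank + Module.finrank ℂ ((LinearMap.ker f ⊓ LinearMap.range g :
      Submodule ℂ (Fin k → ℂ))) = B.rank := by
    have := key17 f (LinearMap.range g)
    rwa [← LinearMap.range_comp, ← Matrix.mulVecLin_mul] at this
  have e2 : (A * B * C).rank + Module.finrank ℂ ((LinearMap.ker f ⊓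
      LinearMap.range (g ∘ₗ h) : Submodule ℂ (Fin k → ℂ))) = (B * C).rank := by
    have := key17 f (LinearMap.range (g ∘ₗ h))
    rw [← LinearMap.range_comp] at this
    rw [Matrix.rank, Matrix.rank, Matrix.mulVecLin_mul, Matrix.mulVecLin_mul,
      Matrix.mulVecLin_mul]
    rw [← LinearMap.comp_assoc] at this
    exact this
  have mono : Module.finrank ℂ ((LinearMap.ker f ⊓ LinearMap.range (g ∘ₗ h) :
      Submodule ℂ (Fin k → ℂ))) ≤ Module.finrank ℂ ((LinearMap.ker f ⊓ LinearMap.range g :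
      Submodule ℂ (Fin k → ℂ))) := by
    apply Submodule.finrank_mono
    exact inf_le_inf_left _ (LinearMap.range_comp_le_range h g)
  omega

lemma nilrank17 {k α : ℕ} (N : Matrix (Fin k) (Fin k) ℂ) (hnil : N ^ α = 0) :
    ∀ j ≤ α, j * (N ^ (α - 1)).rank ≤ (N ^ (α - j)).rank := by
  intro j hj
  induction j with
  | zero => simp
  | succ j ih =>
    have hj' : j ≤ α := by omega
    have step : (j + 1) * (N ^ (α - 1)).rank ≤ (N ^ (α - j)).rank + (N ^ (α - 1)).rank := by
      have := ih hj'
      nlinarith [this]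
    refine le_trans step ?_
    have hf := frob17 N (N ^ (α - (j+1))) (N ^ j)
    have h1 : N * N ^ (α - (j+1)) = N ^ (α - j) := by
      rw [← pow_succ']
      congr 1
      omega
    have h2 : N ^ (α - (j+1)) * N ^ j = N ^ (α - 1) := by
      rw [← pow_add]
      congr 1
      omega
    have h3 : N * N ^ (α - (j+1)) * N ^ j = 0 := by
      rw [h1, ← pow_add]
      have : α - j + j = α := by omega
      rw [this, hnil]
    rw [h3, h1, h2] at hf
    simpa using hf

lemma rank_pos17 {m n : ℕ} (M : Matrix (Fin m) (Fin n) ℂ) (h : M ≠ 0) : 0 < M.rank := by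
  rcases Nat.eq_zero_or_pos M.rank with h0 | h1
  · exfalso
    apply h
    rw [Matrix.rank] at h0
    have hb : LinearMap.range M.mulVecLin = ⊥ := Submodule.finrank_eq_zero.mp h0
    have hz : M.mulVecLin = 0 := LinearMap.range_eq_bot.mp hb
    ext i j
    have := congrFun (congrArg DFunLike.coe hz) (Pi.single j 1)
    simpa [Matrix.mulVecLin_apply, Matrix.mulVec_single] using congrFun this i
  · exact h1

lemma struct17 (D ρ : ℕ) (hρ : 0 < ρ) (h2ρ : 2 * ρ ≤ D)
    (P : Matrix (Fin ρ) (Fin D) ℂ)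
    (hP : P = Matrix.of fun (i : Fin ρ) (j : Fin D) => if (j : ℕ) = (i : ℕ) + (D - ρ) then 1 else 0)
    (Q : Matrix (Fin D) (Fin ρ) ℂ)
    (hQ : Q = Matrix.of fun (i : Fin D) (j : Fin ρ) => if (i : ℕ) = (j : ℕ) then 1 else 0) :
    (Q * P = Matrix.of fun i j : Fin D =>
      if (j : ℕ) = (i : ℕ) + (D - ρ) ∧ (i : ℕ) < ρ then 1 else 0)
    ∧ P * Q = 0 ∧ Qᵀ * Q = 1 ∧ P * Pᵀ = 1 := by
  subst hP hQ
  refine ⟨?_, ?_, ?_, ?_⟩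
  · ext i j
    simp only [Matrix.mul_apply, Matrix.of_apply, ite_mul, one_mul, zero_mul]
    by_cases h : (i : ℕ) < ρ
    · rw [Finset.sum_eq_single (⟨(i : ℕ), h⟩ : Fin ρ)]
      · simp [h]
      · intro k _ hk
        rw [if_neg]
        intro hik
        exact hk (by ext; simp [← hik])
      · simp
    · rw [Finset.sum_eq_zero]
      · simp [h]
      · intro k _
        rw [if_neg]
        intro hik
        exact h (hik ▸ k.isLt)
  · ext i j
    simp only [Matrix.mul_apply, Matrix.of_apply, ite_mul, one_mul, zero_mul, Matrix.zero_apply]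
    apply Finset.sum_eq_zero
    intro k _
    split_ifs with h1 h2
    · exfalso; have := j.isLt; omega
    · rfl
    · rfl
  · ext i j
    simp only [Matrix.mul_apply, Matrix.transpose_apply, Matrix.of_apply, ite_mul, one_mul,
      zero_mul, Matrix.one_apply]
    have hiD : (i : ℕ) < D := lt_of_lt_of_le i.isLt (by omega)
    rw [Finset.sum_eq_single (⟨(i : ℕ), hiD⟩ : Fin D)]
    · simp [Fin.ext_iff]
    · intro k _ hk
      rw [if_neg]
      intro hik
      exact hk (by ext; simp [hik])
    · simp
  · ext i j
    simp only [Matrix.mul_apply, Matrix.transpose_apply, Matrix.of_apply, ite_mul, one_mul,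
      zero_mul, Matrix.one_apply]
    have hiD : (i : ℕ) + (D - ρ) < D := by have := i.isLt; omega
    rw [Finset.sum_eq_single (⟨(i : ℕ) + (D - ρ), hiD⟩ : Fin D)]
    · simp [Fin.ext_iff]
    · intro k _ hk
      rw [if_neg]
      intro hik
      exact hk (by ext; simp [hik])
    · simp

theorem stmt17 (D ρ : ℕ) (hρ : 0 < ρ) (h2ρ : 2 * ρ ≤ D)
    (H : Matrix (Fin D) (Fin D) ℂ)
    (hH : H = Matrix.of fun i j : Fin D =>
      if (j : ℕ) = (i : ℕ) + (D - ρ) ∧ (i : ℕ) < ρ then 1 else 0)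
    (hH2 : H * H = 0) (hHrank : H.rank = ρ)
    (P : Matrix (Fin ρ) (Fin D) ℂ)
    (hP : P = Matrix.of fun (i : Fin ρ) (j : Fin D) => if (j : ℕ) = (i : ℕ) + (D - ρ) then 1 else 0)
    (Q : Matrix (Fin D) (Fin ρ) ℂ)
    (hQ : Q = Matrix.of fun (i : Fin D) (j : Fin ρ) => if (i : ℕ) = (j : ℕ) then 1 else 0)
    (A : Matrix (Fin D) (Fin D) ℂ) (α : ℕ) (hα : 1 < α)
    (hnil : (P * A * Q) ^ α = 0) (hne : (P * A * Q) ^ (α - 1) ≠ 0) :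
    ((H * A) ^ (α - 1) * H) * ((H * A) ^ (α - 1) * H) = 0 ∧
      0 < ((H * A) ^ (α - 1) * H).rank ∧
      (((H * A) ^ (α - 1) * H).rank : ℝ) ≤ (ρ : ℝ) / (α : ℝ) := by
  obtain ⟨hQP, hPQ, hQtQ, hPPt⟩ := struct17 D ρ hρ h2ρ P hP Q hQ
  rw [← hH] at hQP
  set N := P * A * Q with hN
  have hpow : ∀ k, (H * A) ^ k * H = Q * N ^ k * P := by
    intro k
    induction k with
    | zero => simp [hQP]
    | succ k ih =>
      rw [pow_succ', Matrix.mul_assoc, ih, pow_succ', ← hQP]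
      simp only [hN, Matrix.mul_assoc]
  have hH1 : (H * A) ^ (α - 1) * H = Q * N ^ (α - 1) * P := hpow (α - 1)
  have part1 : ((H * A) ^ (α - 1) * H) * ((H * A) ^ (α - 1) * H) = 0 := by
    rw [hH1]
    rw [Matrix.mul_assoc (Q * N ^ (α - 1)) P (Q * N ^ (α - 1) * P),
      Matrix.mul_assoc Q (N ^ (α - 1)) P, ← Matrix.mul_assoc P Q, hPQ,
      Matrix.zero_mul, Matrix.mul_zero]
  have hrank : ((H * A) ^ (α - 1) * H).rank = (N ^ (α - 1)).rank := by
    apply le_antisymm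
    · rw [hH1]
      calc (Q * N ^ (α - 1) * P).rank ≤ (Q * N ^ (α - 1)).rank := Matrix.rank_mul_le_left _ _
        _ ≤ (N ^ (α - 1)).rank := Matrix.rank_mul_le_right _ _
    · have hrec : N ^ (α - 1) = Qᵀ * (Q * N ^ (α - 1) * P) * Pᵀ := by
        rw [Matrix.mul_assoc, Matrix.mul_assoc (Q * N ^ (α - 1)), hPPt, Matrix.mul_one,
          ← Matrix.mul_assoc, hQtQ, Matrix.one_mul]
      rw [hH1]
      calc (N ^ (α - 1)).rank = (Qᵀ * (Q * N ^ (α - 1) * P) * Pᵀ).rank := by rw [← hrec]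
        _ ≤ (Qᵀ * (Q * N ^ (α - 1) * P)).rank := Matrix.rank_mul_le_left _ _
        _ ≤ (Q * N ^ (α - 1) * P).rank := Matrix.rank_mul_le_right _ _
  have hpos : 0 < (N ^ (α - 1)).rank := rank_pos17 _ hne
  have hbound : α * (N ^ (α - 1)).rank ≤ ρ := by
    have := nilrank17 N hnil α le_rfl
    simp only [Nat.sub_self, pow_zero] at this
    rwa [Matrix.rank_one, Fintype.card_fin] at this
  refine ⟨part1, by rw [hrank]; exact hpos, ?_⟩
  rw [hrank]
  rw [le_div_iff₀ (by exact_mod_cast Nat.lt_of_lt_of_le Nat.zero_lt_one hα.le)]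
  calc ((N ^ (α - 1)).rank : ℝ) * α = (α * (N ^ (α - 1)).rank : ℕ) := by push_cast; ring
    _ ≤ (ρ : ℕ) := by exact_mod_cast hbound
end
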